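/- For random context grammars (nonerasing), the two definitions of the direct derivation step — one checking the permitting/forbidding conditions against alph(uv) (excluding the rewritten symbol) and one checking against alph(uAv) (including it) — yield the same family of languages. -/
import Mathlib


/-- Symbols: nonterminals `N` plus terminals `T`. -/
abbrev Symb (N T : Type) := N ⊕ T

/-- `alph w` is the set of symbols occurring in the string `w`. -/
def alph {α : Type} (w : List α) : Set α := {a | a ∈ w}

/-- A (nonerasing) random context grammar: finitely many productions
`(A → x, Per, For)` with `A ∈ N`, `x ∈ (N ∪ T)⁺`, `Per, For ⊆ N`. -/
structure RCG (N T : Type) where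
  rules : Set (N × List (Symb N T) × Set N × Set N)
  fin : rules.Finite
  ne : ∀ r ∈ rules, r.2.1 ≠ []
  start : N

/-- One derivation step of a random context grammar.  The flag `incl` tells whether
the rewritten symbol is included in the context check (`true`: conditions checked
against `alph (uAv)`; `false`: against `alph (uv)`). -/
def RCG.Step {N T : Type} (G : RCG N T) (incl : Bool)
    (s₁ s₂ : List (Symb N T)) : Prop :=
  ∃ A x Per For u v, (A, x, Per, For) ∈ G.rules ∧
    s₁ = u ++ Sum.inl A :: v ∧ s₂ = u ++ x ++ v ∧
    (∀ B ∈ Per, Sum.inl B ∈ alph (if incl then s₁ else u ++ v)) ∧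
    (∀ B ∈ For, Sum.inl B ∉ alph (if incl then s₁ else u ++ v))

/-- The language of a random context grammar (under the chosen derivation definition). -/
def RCG.Lang {N T : Type} (G : RCG N T) (incl : Bool) : Set (List T) :=
  {w | Relation.ReflTransGen (G.Step incl) [Sum.inl G.start] (w.map Sum.inr)}

/-- The family of random context languages over terminal alphabet `T`
(standard definition: rewritten symbol excluded from the context check). -/
def RC (T : Type) : Set (Set (List T)) :=
  {L | ∃ (N : Type) (G : RCG N T), G.Lang false = L}

/-- A (nonerasing) semi-conditional grammar of degree (1,1): productions
`(A → x, Per, For)` with `Per, For ⊆ N ∪ T` of cardinality at most one. -/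
structure SCG (N T : Type) where
  rules : Set (N × List (Symb N T) × Set (Symb N T) × Set (Symb N T))
  fin : rules.Finite
  ne : ∀ r ∈ rules, r.2.1 ≠ []
  per1 : ∀ r ∈ rules, r.2.2.1.Subsingleton
  for1 : ∀ r ∈ rules, r.2.2.2.Subsingleton
  start : N

/-- One derivation step of a semi-conditional grammar; `incl` as in `RCG.Step`. -/
def SCG.Step {N T : Type} (G : SCG N T) (incl : Bool)
    (s₁ s₂ : List (Symb N T)) : Prop :=
  ∃ A x Per For u v, (A, x, Per, For) ∈ G.rules ∧
    s₁ = u ++ Sum.inl A :: v ∧ s₂ = u ++ x ++ v ∧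
    Per ⊆ alph (if incl then s₁ else u ++ v) ∧
    (∀ a ∈ For, a ∉ alph (if incl then s₁ else u ++ v))

/-- The language of a semi-conditional grammar. -/
def SCG.Lang {N T : Type} (G : SCG N T) (incl : Bool) : Set (List T) :=
  {w | Relation.ReflTransGen (G.Step incl) [Sum.inl G.start] (w.map Sum.inr)}

/-- The family SC(1,1): inclusive derivation definition (context `alph (uAv)`). -/
def SC11 (T : Type) : Set (Set (List T)) :=
  {L | ∃ (N : Type) (G : SCG N T), G.Lang true = L}

/-- The family SC'(1,1): exclusive derivation definition (context `alph (uv)`). -/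
def SC11' (T : Type) : Set (Set (List T)) :=
  {L | ∃ (N : Type) (G : SCG N T), G.Lang false = L}

section AuxRC

variable {N T : Type}

@[simp] lemma mem_alph {α : Type} (a : α) (w : List α) : a ∈ alph w ↔ a ∈ w := Iff.rfl

/-! ### Direction 1: inclusive → exclusive -/

/-- Transform an inclusive-style RCG into an equivalent exclusive-style one:
drop rules whose left-hand side is forbidden, and remove the left-hand side
from the permitting set. -/
def exclG (G : RCG N T) : RCG N T where
  rules := (fun r => (r.1, r.2.1, r.2.2.1 \ {r.1}, r.2.2.2)) '' {r ∈ G.rules | r.1 ∉ r.2.2.2}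
  fin := (G.fin.subset (Set.sep_subset _ _)).image _
  ne := by
    rintro r ⟨r₀, ⟨hr, _⟩, rfl⟩
    exact G.ne r₀ hr
  start := G.start

lemma exclG_step (G : RCG N T) (s₁ s₂ : List (Symb N T)) :
    (exclG G).Step false s₁ s₂ ↔ G.Step true s₁ s₂ := by
  constructor
  · rintro ⟨A, x, Per', For, u, v, hrule, rfl, rfl, hper, hfor⟩
    obtain ⟨⟨A₀, x₀, Per₀, For₀⟩, ⟨hr0, hAF⟩, heq⟩ := hrule
    simp only at hAF
    obtain ⟨rfl, rfl, hP, rfl⟩ : A₀ = A ∧ x₀ = x ∧ Per₀ \ {A₀} = Per' ∧ For₀ = For := by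
      simpa [Prod.ext_iff] using heq
    refine ⟨A₀, x₀, Per₀, For₀, u, v, hr0, rfl, rfl, ?_, ?_⟩
    · intro B hB
      simp only [Bool.false_eq_true, if_false, if_true, mem_alph, List.mem_append, List.mem_cons]
      by_cases hBA : B = A₀
      · subst hBA; tauto
      · have := hper B (by rw [← hP]; exact ⟨hB, hBA⟩)
        simp only [Bool.false_eq_true, if_false, if_true, mem_alph, List.mem_append] at this
        tauto
    · intro B hB
      simp only [Bool.false_eq_true, if_false, if_true, mem_alph, List.mem_append, List.mem_cons]
      push_neg
      have h1 := hfor B hB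
      simp only [Bool.false_eq_true, if_false, if_true, mem_alph, List.mem_append] at h1
      push_neg at h1
      refine ⟨h1.1, ?_, h1.2⟩
      intro hcon
      rw [Sum.inl.injEq] at hcon
      subst hcon
      exact hAF hB
  · rintro ⟨A, x, Per, For, u, v, hrule, rfl, rfl, hper, hfor⟩
    have hAF : A ∉ For := by
      intro h
      exact hfor A h (by simp)
    refine ⟨A, x, Per \ {A}, For, u, v, ⟨(A, x, Per, For), ⟨hrule, hAF⟩, rfl⟩, rfl, rfl, ?_, ?_⟩
    · intro B hB
      have := hper B hB.1
      simp only [Bool.false_eq_true, if_false, if_true, mem_alph, List.mem_append, List.mem_cons] at this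
      simp only [Bool.false_eq_true, if_false, if_true, mem_alph, List.mem_append]
      rcases this with h | h | h
      · exact Or.inl h
      · exact absurd (by simpa using h) hB.2
      · exact Or.inr h
    · intro B hB
      have := hfor B hB
      simp only [Bool.false_eq_true, if_false, if_true, mem_alph, List.mem_append, List.mem_cons] at this
      simp only [Bool.false_eq_true, if_false, if_true, mem_alph, List.mem_append]
      push_neg at this ⊢
      exact ⟨this.1, this.2.2⟩

lemma exclG_lang (G : RCG N T) : (exclG G).Lang false = G.Lang true := by
  have hstep : (exclG G).Step false = G.Step true := by
    funext s₁ s₂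
    exact propext (exclG_step G s₁ s₂)
  ext w
  simp only [RCG.Lang, Set.mem_setOf_eq, hstep]
  rfl

/-! ### Direction 2: exclusive → inclusive, via markers -/

/-- The type of "rules", used as markers. -/
abbrev Mk (N T : Type) := N × List (Symb N T) × Set N × Set N

abbrev N2 (N T : Type) := N ⊕ Mk N T

/-- Embedding of old symbols into the new symbol type. -/
def emb : Symb N T → Symb (N2 N T) T := Sum.map Sum.inl id

/-- Projection of new symbols back to old ones (a marker projects to its
left-hand side). -/
def hmap : Symb (N2 N T) T → Symb N T
  | .inl (.inl A) => .inl A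
  | .inl (.inr r) => .inl r.1
  | .inr t => .inr t

@[simp] lemma hmap_emb (c : Symb N T) : hmap (emb c) = c := by
  cases c <;> rfl

@[simp] lemma hmap_map_emb (l : List (Symb N T)) : (l.map emb).map hmap = l := by
  simp [List.map_map, Function.comp_def]

/-- Marker detector. -/
def isM : Symb (N2 N T) T → Bool
  | .inl (.inr _) => true
  | _ => false

@[simp] lemma isM_marker (r : Mk N T) :
    isM (Sum.inl (Sum.inr r) : Symb (N2 N T) T) = true := rfl

@[simp] lemma isM_inl (A : N) :
    isM (Sum.inl (Sum.inl A) : Symb (N2 N T) T) = false := rfl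

@[simp] lemma isM_inr (t : T) :
    isM (Sum.inr t : Symb (N2 N T) T) = false := rfl

lemma isM_iff (c : Symb (N2 N T) T) : isM c = true ↔ ∃ r, c = Sum.inl (Sum.inr r) := by
  rcases c with (A | r) | t <;> simp

@[simp] lemma isM_emb (c : Symb N T) : isM (emb c) = false := by
  cases c <;> rfl

lemma countP_map_emb (l : List (Symb N T)) : (l.map emb).countP isM = 0 := by
  rw [List.countP_eq_zero]
  rintro c hc
  obtain ⟨d, _, rfl⟩ := List.mem_map.1 hc
  simp

/-- The inclusive-style grammar simulating an exclusive-style one. -/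
def inclG (G : RCG N T) : RCG (N2 N T) T where
  rules :=
    ((fun r => (Sum.inl r.1, [Sum.inl (Sum.inr r)], (∅ : Set (N2 N T)),
        Set.range (Sum.inr : Mk N T → N2 N T))) '' G.rules)
    ∪ ((fun r => ((Sum.inr r : N2 N T), r.2.1.map emb,
        (Sum.inl : N → N2 N T) '' r.2.2.1, (Sum.inl : N → N2 N T) '' r.2.2.2)) '' G.rules)
  fin := (G.fin.image _).union (G.fin.image _)
  ne := by
    rintro r (⟨r₀, h, rfl⟩ | ⟨r₀, h, rfl⟩)
    · simp
    · simpa using G.ne r₀ h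
  start := Sum.inl G.start

lemma inclG_complete_step (G : RCG N T) {s₁ s₂ : List (Symb N T)}
    (h : G.Step false s₁ s₂) :
    Relation.ReflTransGen ((inclG G).Step true) (s₁.map emb) (s₂.map emb) := by
  obtain ⟨A, x, Per, For, u, v, hrule, rfl, rfl, hper, hfor⟩ := h
  set r : Mk N T := (A, x, Per, For) with hr
  set mid : List (Symb (N2 N T) T) :=
    u.map emb ++ Sum.inl (Sum.inr r) :: v.map emb with hmid
  have step1 : (inclG G).Step true ((u ++ Sum.inl A :: v).map emb) mid := by
    refine ⟨Sum.inl A, [Sum.inl (Sum.inr r)], ∅, Set.range Sum.inr,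
      u.map emb, v.map emb, Or.inl ⟨r, hrule, rfl⟩, ?_, ?_, ?_, ?_⟩
    · simp [emb]
    · simp [hmid]
    · simp
    · rintro B ⟨r', rfl⟩ hmem
      simp only [Bool.false_eq_true, if_false, if_true, mem_alph, List.map_append, List.map_cons,
        List.mem_append, List.mem_cons] at hmem
      rcases hmem with hm | hm | hm
      · obtain ⟨d, _, hd⟩ := List.mem_map.1 hm
        cases d <;> simp [emb] at hd
      · simp [emb] at hm
      · obtain ⟨d, _, hd⟩ := List.mem_map.1 hm
        cases d <;> simp [emb] at hd
  have step2 : (inclG G).Step true mid ((u ++ x ++ v).map emb) := by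
    refine ⟨Sum.inr r, x.map emb, Sum.inl '' Per, Sum.inl '' For,
      u.map emb, v.map emb, Or.inr ⟨r, hrule, rfl⟩, rfl, ?_, ?_, ?_⟩
    · simp
    · rintro B' ⟨B, hB, rfl⟩
      have := hper B hB
      simp only [Bool.false_eq_true, if_false, if_true, mem_alph, List.mem_append] at this
      simp only [Bool.false_eq_true, if_false, if_true, mem_alph, hmid, List.mem_append, List.mem_cons]
      rcases this with h | h
      · exact Or.inl (List.mem_map.2 ⟨_, h, rfl⟩)
      · exact Or.inr (Or.inr (List.mem_map.2 ⟨_, h, rfl⟩))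
    · rintro B' ⟨B, hB, rfl⟩ hmem
      have hnB := hfor B hB
      simp only [Bool.false_eq_true, if_false, if_true, mem_alph, List.mem_append] at hnB
      push_neg at hnB
      simp only [Bool.false_eq_true, if_false, if_true, mem_alph, hmid, List.mem_append, List.mem_cons] at hmem
      rcases hmem with hm | hm | hm
      · obtain ⟨d, hd, hde⟩ := List.mem_map.1 hm
        cases d with
        | inl B₀ =>
            simp only [emb, Sum.map_inl, id_eq, Sum.inl.injEq] at hde
            subst hde
            exact hnB.1 hd
        | inr t => simp [emb] at hde
      · simp at hm
      · obtain ⟨d, hd, hde⟩ := List.mem_map.1 hm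
        cases d with
        | inl B₀ =>
            simp only [emb, Sum.map_inl, id_eq, Sum.inl.injEq] at hde
            subst hde
            exact hnB.2 hd
        | inr t => simp [emb] at hde
  exact Relation.ReflTransGen.head step1 (Relation.ReflTransGen.single step2)

lemma inclG_complete (G : RCG N T) {a b : List (Symb N T)}
    (h : Relation.ReflTransGen (G.Step false) a b) :
    Relation.ReflTransGen ((inclG G).Step true) (a.map emb) (b.map emb) := by
  induction h with
  | refl => exact Relation.ReflTransGen.refl
  | tail _ hstep ih => exact ih.trans (inclG_complete_step G hstep)

lemma inclG_sound (G : RCG N T) {s : List (Symb (N2 N T) T)}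
    (h : Relation.ReflTransGen ((inclG G).Step true) [Sum.inl (inclG G).start] s) :
    s.countP isM ≤ 1 ∧
      Relation.ReflTransGen (G.Step false) [Sum.inl G.start] (s.map hmap) := by
  induction h with
  | refl =>
      constructor
      · simp [List.countP_cons, inclG]
      · simp only [inclG, List.map_cons, List.map_nil]
        exact Relation.ReflTransGen.refl
  | tail _ hstep ih =>
      obtain ⟨A', x', Per', For', u, v, hrule, hs1, rfl, hper, hfor⟩ := hstep
      rcases hrule with ⟨r, hrG, heq⟩ | ⟨r, hrG, heq⟩
      · -- marking step
        obtain ⟨rfl, rfl, rfl, rfl⟩ :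
            Sum.inl r.1 = A' ∧ [Sum.inl (Sum.inr r)] = x' ∧ (∅ : Set (N2 N T)) = Per'
              ∧ Set.range (Sum.inr : Mk N T → N2 N T) = For' := by
          simpa [Prod.ext_iff] using heq
        subst hs1
        -- no markers anywhere in the previous string
        have hnomk : ∀ c ∈ u ++ Sum.inl (Sum.inl r.1) :: v, isM c = false := by
          intro c hc
          by_contra hcon
          obtain ⟨r', rfl⟩ := (isM_iff c).1 (by simpa using hcon)
          exact hfor (Sum.inr r') ⟨r', rfl⟩ (by simpa using hc)
        constructor
        · rw [List.countP_append, List.countP_append]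
          have hu : u.countP isM = 0 :=
            List.countP_eq_zero.2 (by intro c hc; simpa using hnomk c (by simp [hc]))
          have hv : v.countP isM = 0 :=
            List.countP_eq_zero.2 (by intro c hc; simpa using hnomk c (by simp [hc]))
          simp [hu, hv, List.countP_cons]
        · have : (u ++ [Sum.inl (Sum.inr r)] ++ v).map hmap
              = (u ++ Sum.inl (Sum.inl r.1) :: v).map hmap := by
            simp [hmap]
          rw [this]
          exact ih.2
      · -- rewriting step
        obtain ⟨rfl, rfl, rfl, rfl⟩ :
            (Sum.inr r : N2 N T) = A' ∧ r.2.1.map emb = x'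
              ∧ (Sum.inl : N → N2 N T) '' r.2.2.1 = Per'
              ∧ (Sum.inl : N → N2 N T) '' r.2.2.2 = For' := by
          simpa [Prod.ext_iff] using heq
        subst hs1
        have hcnt := ih.1
        rw [List.countP_append, List.countP_cons] at hcnt
        simp only [isM_marker, if_true] at hcnt
        have hu0 : u.countP isM = 0 := by omega
        have hv0 : v.countP isM = 0 := by omega
        have hufree : ∀ c ∈ u, isM c = false := fun c hc => by
          have := List.countP_eq_zero.1 hu0 c hc
          simpa using this
        have hvfree : ∀ c ∈ v, isM c = false := fun c hc => by
          have := List.countP_eq_zero.1 hv0 c hc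
          simpa using this
        obtain ⟨A, x, Per, For⟩ := r
        constructor
        · rw [List.countP_append, List.countP_append, hu0, hv0, countP_map_emb]
          norm_num
        · refine ih.2.tail ?_
          refine ⟨A, x, Per, For, u.map hmap, v.map hmap, hrG, ?_, ?_, ?_, ?_⟩
          · simp [hmap]
          · simp [Function.comp_def]
          · intro B hB
            have := hper (Sum.inl B) ⟨B, hB, rfl⟩
            simp only [Bool.false_eq_true, if_false, if_true, mem_alph, List.mem_append, List.mem_cons] at this
            simp only [Bool.false_eq_true, if_false, if_true, mem_alph, List.mem_append]
            rcases this with h | h | h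
            · exact Or.inl (List.mem_map.2 ⟨_, h, rfl⟩)
            · simp at h
            · exact Or.inr (List.mem_map.2 ⟨_, h, rfl⟩)
          · intro B hB hmem
            have hnB := hfor (Sum.inl B) ⟨B, hB, rfl⟩
            simp only [Bool.false_eq_true, if_false, if_true, mem_alph, List.mem_append, List.mem_cons] at hnB
            push_neg at hnB
            simp only [Bool.false_eq_true, if_false, if_true, mem_alph, List.mem_append] at hmem
            rcases hmem with hm | hm
            all_goals {
              obtain ⟨d, hd, hde⟩ := List.mem_map.1 hm
              rcases d with (B₀ | r') | t
              · simp only [hmap, Sum.inl.injEq] at hde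
                subst hde
                first
                  | exact hnB.1 hd
                  | exact hnB.2.2 hd
              · exfalso
                first
                  | exact absurd (hufree _ hd) (by simp)
                  | exact absurd (hvfree _ hd) (by simp)
              · simp [hmap] at hde
            }

lemma inclG_lang (G : RCG N T) : (inclG G).Lang true = G.Lang false := by
  ext w
  simp only [RCG.Lang, Set.mem_setOf_eq]
  constructor
  · intro h
    have := (inclG_sound G h).2
    rwa [show (w.map Sum.inr).map hmap = w.map Sum.inr by
      simp [List.map_map, Function.comp_def, hmap]] at this
  · intro h
    have := inclG_complete G h
    simp only [List.map_cons, List.map_nil, List.map_map] at this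
    rwa [show (emb ∘ Sum.inr : T → Symb (N2 N T) T) = Sum.inr from rfl,
      show emb (Sum.inl G.start : Symb N T) = Sum.inl (Sum.inl G.start) from rfl] at this

end AuxRC

/-- for random context grammars, the inclusive and exclusive
definitions of the direct derivation step yield the same family of languages. -/
theorem rc_incl_eq_excl (T : Type) :
    {L | ∃ (N : Type) (G : RCG N T), G.Lang true = L} = RC T := by
  ext L
  constructor
  · rintro ⟨N, G, rfl⟩
    exact ⟨N, exclG G, exclG_lang G⟩
  · rintro ⟨N, G, rfl⟩
    exact ⟨N2 N T, inclG G, inclG_lang G⟩
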